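/- arXiv:2102.00741 — 7 statements merged into one kernel-verified Lean document; each statement's English description precedes it below -/
import Mathlib

section
/- For the implicit upwind scheme for linear advection u_t + a u_x = 0 with a > 0, defined by u_j^n = u_j^{n+1} + λa(u_j^{n+1} - u_{j-1}^{n+1}) on a periodic grid, the total variation satisfies TV(u^{n+1}) ≤ TV(u^n) for every λ > 0. -/
/-- TVD property of the implicit upwind scheme for linear advection `u_t + a u_x = 0`,
`a > 0`, on a periodic grid: if `u_j^n = (1+λa) u_j^{n+1} - λa u_{j-1}^{n+1}` for all `j`,
then `TV(u^{n+1}) ≤ TV(u^n)`, for every mesh ratio `λ > 0`. -/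
theorem implicit_upwind_TVD (N : ℕ) [NeZero N] (a lam : ℝ) (ha : 0 < a) (hlam : 0 < lam)
    (u v : ZMod N → ℝ)
    (hscheme : ∀ j : ZMod N, u j = (1 + lam * a) * v j - lam * a * v (j - 1)) :
    ∑ j : ZMod N, |v j - v (j - 1)| ≤ ∑ j : ZMod N, |u j - u (j - 1)| := by
  set w : ZMod N → ℝ := fun j => |v j - v (j - 1)| with hw
  have hshift : ∑ j : ZMod N, w (j - 1) = ∑ j : ZMod N, w j := by
    exact Fintype.sum_equiv (Equiv.subRight (1 : ZMod N)) _ _ (fun j => rfl)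
  have hla : 0 ≤ lam * a := le_of_lt (mul_pos hlam ha)
  have key : ∀ j : ZMod N, (1 + lam * a) * w j - lam * a * w (j - 1) ≤ |u j - u (j - 1)| := by
    intro j
    have h1 : u j - u (j - 1) =
        (1 + lam * a) * (v j - v (j - 1)) - lam * a * (v (j - 1) - v (j - 1 - 1)) := by
      rw [hscheme j, hscheme (j - 1)]; ring
    calc (1 + lam * a) * w j - lam * a * w (j - 1)
        = |(1 + lam * a) * (v j - v (j - 1))| - |lam * a * (v (j - 1) - v (j - 1 - 1))| := by
          rw [abs_mul, abs_mul, abs_of_nonneg (by linarith : (0:ℝ) ≤ 1 + lam * a),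
            abs_of_nonneg hla]
      _ ≤ |(1 + lam * a) * (v j - v (j - 1)) - lam * a * (v (j - 1) - v (j - 1 - 1))| :=
          abs_sub_abs_le_abs_sub _ _
      _ = |u j - u (j - 1)| := by rw [h1]
  calc ∑ j : ZMod N, w j
      = (1 + lam * a) * ∑ j : ZMod N, w j - lam * a * ∑ j : ZMod N, w (j - 1) := by
        rw [hshift]; ring
    _ = ∑ j : ZMod N, ((1 + lam * a) * w j - lam * a * w (j - 1)) := by
        rw [Finset.sum_sub_distrib, Finset.mul_sum, Finset.mul_sum]
    _ ≤ ∑ j : ZMod N, |u j - u (j - 1)| := Finset.sum_le_sum fun j _ => key j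
end

section
/- Let a scheme (explicit in form) be written as u_j^{n+1} = u_j^n - C_{j-1}(u_j^n - u_{j-1}^n) on a periodic grid, where the coefficients satisfy 0 ≤ C_j ≤ 1 for all j. Then TV(u^{n+1}) ≤ TV(u^n). -/
/-!
Each new increment is a convex-type combination of two old increments,
`v j - v (j-1) = (1 - C (j-1)) (u j - u (j-1)) + C (j-2) (u (j-1) - u (j-2))`,
with nonnegative weights. Summing the triangle inequality over the periodic grid, the weight
`C (j-2)` carried by the increment at `j-1` reappears, after a shift of index, as the weight
`C (j-1)` of the increment at `j`, so the weights of each old increment add up to `1`.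
-/

section Upwind

variable {G : Type*} [AddGroup G]

theorem abs_sub_shift_le_of_upwind (C u v : G → ℝ) (s : G) (hC : ∀ j, 0 ≤ C j ∧ C j ≤ 1)
    (hscheme : ∀ j, v j = u j - C (j - s) * (u j - u (j - s))) (j : G) :
    |v j - v (j - s)| ≤
      (1 - C (j - s)) * |u j - u (j - s)| + C (j - s - s) * |u (j - s) - u (j - s - s)| := by
  have hincrement : v j - v (j - s) = (1 - C (j - s)) * (u j - u (j - s)) +
      C (j - s - s) * (u (j - s) - u (j - s - s)) := by
    rw [hscheme j, hscheme (j - s)]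
    ring
  rw [hincrement]
  calc _ ≤ |(1 - C (j - s)) * (u j - u (j - s))| + |C (j - s - s) * (u (j - s) - u (j - s - s))| :=
        abs_add_le _ _
    _ = _ := by
        rw [abs_mul, abs_mul, abs_of_nonneg (sub_nonneg.2 (hC _).2), abs_of_nonneg (hC _).1]

theorem sum_abs_sub_shift_le_of_upwind [Fintype G] (C u v : G → ℝ) (s : G)
    (hC : ∀ j, 0 ≤ C j ∧ C j ≤ 1) (hscheme : ∀ j, v j = u j - C (j - s) * (u j - u (j - s))) :
    ∑ j, |v j - v (j - s)| ≤ ∑ j, |u j - u (j - s)| := by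
  have hshift : ∑ j, C (j - s - s) * |u (j - s) - u (j - s - s)| =
      ∑ j, C (j - s) * |u j - u (j - s)| :=
    (Equiv.subRight s).sum_comp fun j => C (j - s) * |u j - u (j - s)|
  calc ∑ j, |v j - v (j - s)|
      ≤ ∑ j, ((1 - C (j - s)) * |u j - u (j - s)| +
          C (j - s - s) * |u (j - s) - u (j - s - s)|) :=
        Finset.sum_le_sum fun j _ => abs_sub_shift_le_of_upwind C u v s hC hscheme j
    _ = ∑ j, ((1 - C (j - s)) * |u j - u (j - s)| + C (j - s) * |u j - u (j - s)|) := by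
        rw [Finset.sum_add_distrib, Finset.sum_add_distrib, hshift]
    _ = ∑ j, |u j - u (j - s)| := Finset.sum_congr rfl fun j _ => by ring

end Upwind

/-- Harten's lemma (incremental form with only a `C`-coefficient) on a periodic grid:
if `u_j^{n+1} = u_j^n - C_{j-1}(u_j^n - u_{j-1}^n)` with `0 ≤ C_j ≤ 1` for all `j`,
then `TV(u^{n+1}) ≤ TV(u^n)`. -/
theorem harten_explicit_TVD (N : ℕ) [NeZero N] (C : ZMod N → ℝ)
    (hC : ∀ j, 0 ≤ C j ∧ C j ≤ 1) (u v : ZMod N → ℝ)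
    (hscheme : ∀ j : ZMod N, v j = u j - C (j - 1) * (u j - u (j - 1))) :
    ∑ j : ZMod N, |v j - v (j - 1)| ≤ ∑ j : ZMod N, |u j - u (j - 1)| :=
  sum_abs_sub_shift_le_of_upwind C u v 1 hC hscheme
end

section
/- Let an implicit scheme be written as u_j^n = u_j^{n+1} + C_{j-1}(u_j^{n+1} - u_{j-1}^{n+1}) on a periodic grid, where C_j ≥ 0 for all j. Then TV(u^{n+1}) ≤ TV(u^n), with no upper bound required on C_j. -/
/-!
Write `d_j = v_j - v_{j-1}` for the jumps of the new solution and `F_j = C_{j-1} |d_j|`.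
The scheme gives `u_j - u_{j-1} = (1 + C_{j-1}) d_j - C_{j-2} d_{j-1}`, so the triangle inequality
yields `|d_j| + F_j ≤ |u_j - u_{j-1}| + F_{j-1}`. Summing over the periodic grid, the terms `F`
telescope away because the sum is invariant under the shift `j ↦ j - 1`.
-/

open Finset

lemma one_add_mul_abs_le {c c' : ℝ} (hc : 0 ≤ c) (hc' : 0 ≤ c') (x y : ℝ) :
    (1 + c) * |x| ≤ |(1 + c) * x - c' * y| + c' * |y| :=
  calc (1 + c) * |x| = |(1 + c) * x - c' * y + c' * y| := by
        rw [sub_add_cancel, abs_mul, abs_of_nonneg (by linarith : 0 ≤ 1 + c)]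
    _ ≤ |(1 + c) * x - c' * y| + |c' * y| := abs_add_le _ _
    _ = |(1 + c) * x - c' * y| + c' * |y| := by rw [abs_mul, abs_of_nonneg hc']

section ImplicitUpwind

variable {G : Type*} [AddGroup G] (s : G) {C : G → ℝ} {u v : G → ℝ}

lemma implicit_upwind_jump_le (hC : ∀ j, 0 ≤ C j)
    (hscheme : ∀ j, u j = v j + C (j - s) * (v j - v (j - s))) (j : G) :
    |v j - v (j - s)| + C (j - s) * |v j - v (j - s)| ≤
      |u j - u (j - s)| + C (j - s - s) * |v (j - s) - v (j - s - s)| := by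
  have hjump : u j - u (j - s) = (1 + C (j - s)) * (v j - v (j - s))
      - C (j - s - s) * (v (j - s) - v (j - s - s)) := by
    rw [hscheme j, hscheme (j - s)]; ring
  rw [hjump, ← one_add_mul]
  exact one_add_mul_abs_le (hC _) (hC _) _ _

theorem sum_abs_sub_le_of_implicit_upwind [Fintype G] (hC : ∀ j, 0 ≤ C j)
    (hscheme : ∀ j, u j = v j + C (j - s) * (v j - v (j - s))) :
    ∑ j, |v j - v (j - s)| ≤ ∑ j, |u j - u (j - s)| := by
  set F : G → ℝ := fun j ↦ C (j - s) * |v j - v (j - s)|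
  have hshift : ∑ j, F (j - s) = ∑ j, F j := Equiv.sum_comp (Equiv.subRight s) F
  have hsum := sum_le_sum fun j (_ : j ∈ univ) ↦ implicit_upwind_jump_le s hC hscheme j
  rw [sum_add_distrib, sum_add_distrib] at hsum
  change _ + ∑ j, F j ≤ _ + ∑ j, F (j - s) at hsum
  linarith

end ImplicitUpwind

/-- Implicit Harten-type lemma on a periodic grid: if the implicit scheme
`u_j^n = u_j^{n+1} + C_{j-1}(u_j^{n+1} - u_{j-1}^{n+1})` holds with `C_j ≥ 0` for all `j`
(no upper bound on `C_j` required), then `TV(u^{n+1}) ≤ TV(u^n)`. -/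
theorem harten_implicit_TVD (N : ℕ) [NeZero N] (C : ZMod N → ℝ)
    (hC : ∀ j, 0 ≤ C j) (u v : ZMod N → ℝ)
    (hscheme : ∀ j : ZMod N, u j = v j + C (j - 1) * (v j - v (j - 1))) :
    ∑ j : ZMod N, |v j - v (j - 1)| ≤ ∑ j : ZMod N, |u j - u (j - 1)| :=
  sum_abs_sub_le_of_implicit_upwind 1 hC hscheme
end

section
/- For the explicit second-order limited scheme u_j^{n+1} = u_j^n - C_{j-1}(u_j^n - u_{j-1}^n) with C_{j-1} = λa[1 - (1/2)(Φ(θ_{j-1}) - Φ(θ_j)/θ_j)], if the limiter satisfies 0 ≤ Φ(θ) ≤ 2 and 0 ≤ Φ(θ)/θ ≤ 2 for all θ ≠ 0, then C_j ≥ 0 for all j, and if additionally λa ≤ 1/2 then C_j ≤ 1 for all j. -/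
/-- For the limited second-order scheme with coefficients
`C_j = λa (1 - ½(Φ(θ_j) - Φ(θ_{j+1})/θ_{j+1}))`, if the limiter satisfies
`Φ(θ) = 0` for `θ ≤ 0`, `0 ≤ Φ(θ) ≤ 2`, and `0 ≤ Φ(θ)/θ ≤ 2` for `θ ≠ 0`,
then `C_j ≥ 0` for all `j`; if moreover `λa ≤ 1/2` then `C_j ≤ 1` for all `j`. -/
theorem limited_scheme_coeff_bounds (a lam : ℝ) (ha : 0 < a) (hlam : 0 < lam)
    (Phi : ℝ → ℝ) (hPhi0 : ∀ t : ℝ, t ≤ 0 → Phi t = 0)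
    (hPhiBound : ∀ t : ℝ, 0 ≤ Phi t ∧ Phi t ≤ 2)
    (hPhiRatio : ∀ t : ℝ, t ≠ 0 → 0 ≤ Phi t / t ∧ Phi t / t ≤ 2)
    (theta : ℤ → ℝ) (C : ℤ → ℝ)
    (hCdef : ∀ j : ℤ,
      C j = lam * a * (1 - (1 / 2) * (Phi (theta j) - Phi (theta (j + 1)) / theta (j + 1)))) :
    (∀ j : ℤ, 0 ≤ C j) ∧ (lam * a ≤ 1 / 2 → ∀ j : ℤ, C j ≤ 1) := by
  have hratio : ∀ t : ℝ, 0 ≤ Phi t / t ∧ Phi t / t ≤ 2 := by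
    intro t
    by_cases h : t = 0
    · simp [h, hPhi0 0 le_rfl]
    · exact hPhiRatio t h
  have hE : ∀ j : ℤ,
      0 ≤ 1 - (1 / 2) * (Phi (theta j) - Phi (theta (j + 1)) / theta (j + 1)) ∧
      1 - (1 / 2) * (Phi (theta j) - Phi (theta (j + 1)) / theta (j + 1)) ≤ 2 := by
    intro j
    obtain ⟨h1, h2⟩ := hPhiBound (theta j)
    obtain ⟨h3, h4⟩ := hratio (theta (j + 1))
    constructor <;> nlinarith
  have hla : 0 < lam * a := mul_pos hlam ha
  constructor
  · intro j
    rw [hCdef j]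
    exact mul_nonneg hla.le (hE j).1
  · intro hhalf j
    rw [hCdef j]
    nlinarith [(hE j).2, (hE j).1]
end

section
/- If the CWENO nonlinear weights satisfy ω_{j,k} = C_k + O(h) for k ∈ {0, L, R} and the component polynomials satisfy P_j^{(2)}(x) = U(x) + O(h³) and P_{j,L}^{(1)}(x), P_{j,R}^{(1)}(x) = U(x) + O(h²) uniformly on the cell, then the reconstruction P_rec = ω_{j,0} P_{j,0} + ω_{j,L} P_{j,L}^{(1)} + ω_{j,R} P_{j,R}^{(1)}, where P_{j,0} = (P_j^{(2)} − C_L P_{j,L}^{(1)} − C_R P_{j,R}^{(1)})/C_0, satisfies P_rec(x) = U(x) + O(h³) uniformly on the cell. -/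
/-!
Since both the weights and the linear coefficients sum to one, the reconstruction error splits as
`ω₀/C₀ · (P⁽²⁾ - U) + Σₖ (ωₖ - ω₀ Cₖ/C₀)(Pₖ⁽¹⁾ - U)` over `k ∈ {L, R}`.
The first factor is bounded, and each `ωₖ - ω₀ Cₖ/C₀ = (ωₖ - Cₖ) - (ω₀ - C₀) Cₖ/C₀` is `O(h)`,
which upgrades the `O(h²)` error of the low-order polynomials to `O(h³)`.
-/

/-- Indices `0, 1, 2` stand for the central, left and right stencils. -/
noncomputable def cwenoRec (c w : Fin 3 → ℝ) (p2 pL pR : ℝ) : ℝ :=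
  w 0 * ((p2 - c 1 * pL - c 2 * pR) / c 0) + w 1 * pL + w 2 * pR

theorem cwenoRec_sub_eq {c w : Fin 3 → ℝ} (hc0 : c 0 ≠ 0) (hc : ∑ k, c k = 1)
    (hw : ∑ k, w k = 1) (p2 pL pR u : ℝ) :
    cwenoRec c w p2 pL pR - u =
      w 0 / c 0 * (p2 - u) + (w 1 - w 0 * c 1 / c 0) * (pL - u) +
        (w 2 - w 0 * c 2 / c 0) * (pR - u) := by
  rw [Fin.sum_univ_three] at hc hw
  unfold cwenoRec
  field_simp
  linear_combination (c 0 * u) * hw - (w 0 * u) * hc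

theorem abs_sub_mul_div_le {w₀ c₀ w c ε : ℝ} (hc₀ : 0 < c₀) (hc : 0 ≤ c)
    (hw₀ : |w₀ - c₀| ≤ ε) (hw : |w - c| ≤ ε) :
    |w - w₀ * c / c₀| ≤ ε * (1 + c / c₀) := by
  have hcc₀ : 0 ≤ c / c₀ := div_nonneg hc hc₀.le
  calc |w - w₀ * c / c₀| = |(w - c) - (w₀ - c₀) * (c / c₀)| := by
        congr 1; field_simp; ring
    _ ≤ |w - c| + |w₀ - c₀| * (c / c₀) := by
        rw [← abs_of_nonneg hcc₀, ← abs_mul, abs_of_nonneg hcc₀]; exact abs_sub _ _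
    _ ≤ ε + ε * (c / c₀) := by gcongr
    _ = ε * (1 + c / c₀) := by ring

theorem abs_cwenoRec_sub_le {c w : Fin 3 → ℝ} {p2 pL pR u ε δ₂ δ₁ : ℝ}
    (hc0 : 0 < c 0) (hc1 : 0 ≤ c 1) (hc2 : 0 ≤ c 2) (hc : ∑ k, c k = 1)
    (hw : ∑ k, w k = 1) (hwc : ∀ k, |w k - c k| ≤ ε)
    (hp2 : |p2 - u| ≤ δ₂) (hpL : |pL - u| ≤ δ₁) (hpR : |pR - u| ≤ δ₁) :
    |cwenoRec c w p2 pL pR - u| ≤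
      (c 0 + ε) / c 0 * δ₂ + ε * (1 + c 1 / c 0) * δ₁ + ε * (1 + c 2 / c 0) * δ₁ := by
  have hw0 : |w 0| / c 0 ≤ (c 0 + ε) / c 0 := by
    gcongr
    calc |w 0| = |c 0 + (w 0 - c 0)| := by rw [add_sub_cancel]
      _ ≤ |c 0| + |w 0 - c 0| := abs_add_le _ _
      _ ≤ c 0 + ε := by rw [abs_of_pos hc0]; gcongr; exact hwc 0
  have hw1 := abs_sub_mul_div_le hc0 hc1 (hwc 0) (hwc 1)
  have hw2 := abs_sub_mul_div_le hc0 hc2 (hwc 0) (hwc 2)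
  rw [cwenoRec_sub_eq hc0.ne' hc hw]
  refine (abs_add_three _ _ _).trans (add_le_add_three ?_ ?_ ?_) <;> rw [abs_mul]
  · rw [abs_div, abs_of_pos hc0]
    exact mul_le_mul hw0 hp2 (abs_nonneg _) ((by positivity : (0 : ℝ) ≤ |w 0| / c 0).trans hw0)
  · exact mul_le_mul hw1 hpL (abs_nonneg _) ((abs_nonneg _).trans hw1)
  · exact mul_le_mul hw2 hpR (abs_nonneg _) ((abs_nonneg _).trans hw2)

theorem cweno_third_order_general (U : ℝ → ℝ) (C : Fin 3 → ℝ)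
    (hC : ∀ k, C k ∈ Set.Ioo (0 : ℝ) 1) (hCsum : ∑ k, C k = 1)
    (M : ℝ) (cell : ℝ → Set ℝ) (ω : ℝ → Fin 3 → ℝ)
    (P2 PL PR : ℝ → ℝ → ℝ)
    (hωsum : ∀ h ∈ Set.Ioc (0 : ℝ) 1, ∑ k, ω h k = 1)
    (hωC : ∀ h ∈ Set.Ioc (0 : ℝ) 1, ∀ k, |ω h k - C k| ≤ M * h)
    (hP2 : ∀ h ∈ Set.Ioc (0 : ℝ) 1, ∀ x ∈ cell h, |P2 h x - U x| ≤ M * h ^ 3)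
    (hPL : ∀ h ∈ Set.Ioc (0 : ℝ) 1, ∀ x ∈ cell h, |PL h x - U x| ≤ M * h ^ 2)
    (hPR : ∀ h ∈ Set.Ioc (0 : ℝ) 1, ∀ x ∈ cell h, |PR h x - U x| ≤ M * h ^ 2) :
    ∃ M' : ℝ, ∀ h ∈ Set.Ioc (0 : ℝ) 1, ∀ x ∈ cell h,
      |ω h 0 * ((P2 h x - C 1 * PL h x - C 2 * PR h x) / C 0) +
          ω h 1 * PL h x + ω h 2 * PR h x - U x| ≤ M' * h ^ 3 := by
  refine ⟨(C 0 + M) / C 0 * M + M * (1 + C 1 / C 0) * M + M * (1 + C 2 / C 0) * M,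
    fun h hh x hx => ?_⟩
  have hC0 := (hC 0).1
  have hM : 0 ≤ M := nonneg_of_mul_nonneg_left ((abs_nonneg _).trans (hωC h hh 0)) hh.1
  have hMh : M * h ≤ M := mul_le_of_le_one_right hM hh.2
  calc _ ≤ (C 0 + M * h) / C 0 * (M * h ^ 3) + M * h * (1 + C 1 / C 0) * (M * h ^ 2) +
          M * h * (1 + C 2 / C 0) * (M * h ^ 2) :=
        abs_cwenoRec_sub_le hC0 (hC 1).1.le (hC 2).1.le hCsum (hωsum h hh) (hωC h hh)
          (hP2 h hh x hx) (hPL h hh x hx) (hPR h hh x hx)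
    _ ≤ (C 0 + M) / C 0 * (M * h ^ 3) + M * h * (1 + C 1 / C 0) * (M * h ^ 2) +
          M * h * (1 + C 2 / C 0) * (M * h ^ 2) := by
        have : 0 ≤ M * h ^ 3 := mul_nonneg hM (pow_nonneg hh.1.le 3)
        gcongr
    _ = _ := by ring

/-- Third-order accuracy of the CWENO reconstruction: if the nonlinear weights satisfy
`ω_k = C_k + O(h)` and the component polynomials satisfy `P^{(2)} = U + O(h³)`,
`P_L, P_R = U + O(h²)` uniformly on the cell, then
`P_rec = ω_0 P_0 + ω_L P_L + ω_R P_R` with `P_0 = (P^{(2)} - C_L P_L - C_R P_R)/C_0`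
satisfies `P_rec = U + O(h³)` uniformly on the cell. Index `0 ↔ 0`, `1 ↔ L`, `2 ↔ R`. -/
theorem cweno_third_order (U : ℝ → ℝ) (C : Fin 3 → ℝ)
    (hC : ∀ k, C k ∈ Set.Ioo (0 : ℝ) 1) (hCsum : ∑ k, C k = 1)
    (M : ℝ) (cell : ℝ → Set ℝ) (ω : ℝ → Fin 3 → ℝ)
    (P2 PL PR : ℝ → ℝ → ℝ)
    (hωpos : ∀ h ∈ Set.Ioc (0 : ℝ) 1, ∀ k, 0 ≤ ω h k)
    (hωsum : ∀ h ∈ Set.Ioc (0 : ℝ) 1, ∑ k, ω h k = 1)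
    (hωC : ∀ h ∈ Set.Ioc (0 : ℝ) 1, ∀ k, |ω h k - C k| ≤ M * h)
    (hP2 : ∀ h ∈ Set.Ioc (0 : ℝ) 1, ∀ x ∈ cell h, |P2 h x - U x| ≤ M * h ^ 3)
    (hPL : ∀ h ∈ Set.Ioc (0 : ℝ) 1, ∀ x ∈ cell h, |PL h x - U x| ≤ M * h ^ 2)
    (hPR : ∀ h ∈ Set.Ioc (0 : ℝ) 1, ∀ x ∈ cell h, |PR h x - U x| ≤ M * h ^ 2) :
    ∃ M' : ℝ, ∀ h ∈ Set.Ioc (0 : ℝ) 1, ∀ x ∈ cell h,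
      |ω h 0 * ((P2 h x - C 1 * PL h x - C 2 * PR h x) / C 0) +
          ω h 1 * PL h x + ω h 2 * PR h x - U x| ≤ M' * h ^ 3 :=
  cweno_third_order_general U C hC hCsum M cell ω P2 PL PR hωsum hωC hP2 hPL hPR
end

section
/- If the smoothness indicators satisfy I_{j,k} = Ch²(1 + O(h)) for all k ∈ {0, L, R} with the same constant C > 0, and ε = h², τ = 2, then the nonlinear weights satisfy ω_{j,k} = C_k + O(h) for each k. -/
open Finset

set_option maxHeartbeats 1000000 in
lemma cweno_aux (a b c x y z B D S : ℝ) (ha : 0 < a) (hb : 0 < b) (hc : 0 < c)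
    (ha1 : a ≤ 1) (hb1 : b ≤ 1) (hc1 : c ≤ 1)
    (habc : a + b + c = 1) (hB : 0 < B)
    (hx1 : B/2 ≤ x) (hx2 : x ≤ 3*B/2)
    (hy1 : B/2 ≤ y) (hy2 : y ≤ 3*B/2)
    (hz1 : B/2 ≤ z) (hz2 : z ≤ 3*B/2)
    (hxy : |x^2 - y^2| ≤ D) (hxz : |x^2 - z^2| ≤ D)
    (hS : S = a / x^2 + b / y^2 + c / z^2) :
    |(a / x^2) / S - a| ≤ 72 * D / B^2 := by
  have hxp : 0 < x := by linarith
  have hyp : 0 < y := by linarith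
  have hzp : 0 < z := by linarith
  have hD : 0 ≤ D := le_trans (abs_nonneg _) hxy
  have hu : B^2/4 ≤ x^2 ∧ x^2 ≤ 9*B^2/4 := ⟨by nlinarith, by nlinarith⟩
  have hv : B^2/4 ≤ y^2 ∧ y^2 ≤ 9*B^2/4 := ⟨by nlinarith, by nlinarith⟩
  have hw : B^2/4 ≤ z^2 ∧ z^2 ≤ 9*B^2/4 := ⟨by nlinarith, by nlinarith⟩
  have hSpos : 0 < S := by rw [hS]; positivity
  have key4 : ∀ t u : ℝ, 0 < t → 0 < u → u ≤ 9*B^2/4 → t * (4/(9*B^2)) ≤ t / u := by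
    intro t u ht hup hub
    rw [le_div_iff₀ hup]
    have h9 : (4:ℝ)/(9*B^2) * u ≤ 1 := by
      rw [div_mul_eq_mul_div, div_le_one (by positivity)]; nlinarith
    nlinarith [mul_le_mul_of_nonneg_left h9 ht.le]
  have hSlb : 4/(9*B^2) ≤ S := by
    rw [hS]
    have h1 := key4 a (x^2) ha (by positivity) hu.2
    have h2 := key4 b (y^2) hb (by positivity) hv.2
    have h3 := key4 c (z^2) hc (by positivity) hw.2
    nlinarith
  have hN : a / x^2 - a * S =
      a * b * (y^2 - x^2) / (x^2 * y^2) + a * c * (z^2 - x^2) / (x^2 * z^2) := by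
    have hc2 : c = 1 - a - b := by linarith
    rw [hS, hc2]
    field_simp
    ring
  have habs : ∀ p q w₁ : ℝ, 0 < p → p ≤ 1 → 0 < q → q ≤ 1 → |w₁| ≤ D →
      ∀ u v : ℝ, B^2/4 ≤ u → B^2/4 ≤ v →
      |p * q * w₁ / (u * v)| ≤ 16 * D / B^4 := by
    intro p q w₁ hp hp1 hq hq1 hw1 u v huu hvv
    have hup : 0 < u := lt_of_lt_of_le (by positivity) huu
    have hvp : 0 < v := lt_of_lt_of_le (by positivity) hvv
    rw [abs_div, abs_of_pos (by positivity : (0:ℝ) < u * v),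
      div_le_div_iff₀ (by positivity) (by positivity)]
    have hnum : |p * q * w₁| ≤ D := by
      have hpq : p * q ≤ 1 := by nlinarith
      have h0 : |p * q * w₁| = p * q * |w₁| := by
        rw [abs_mul, abs_of_pos (by positivity : (0:ℝ) < p * q)]
      rw [h0]
      nlinarith [mul_nonneg (by nlinarith : (0:ℝ) ≤ 1 - p * q) (abs_nonneg w₁),
        abs_nonneg w₁]
    have huv : B^2/4 * (B^2/4) ≤ u * v := mul_le_mul huu hvv (by positivity) (by positivity)
    nlinarith [abs_nonneg (p * q * w₁), mul_nonneg hD (by nlinarith : (0:ℝ) ≤ u * v - B^4/16),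
      pow_pos hB 4]
  have hNbound : |a / x^2 - a * S| ≤ 32 * D / B^4 := by
    rw [hN]
    have e1 := habs a b (y^2 - x^2) ha ha1 hb hb1 (by rwa [abs_sub_comm]) (x^2) (y^2) hu.1 hv.1
    have e2 := habs a c (z^2 - x^2) ha ha1 hc hc1 (by rwa [abs_sub_comm]) (x^2) (z^2) hu.1 hw.1
    calc |a * b * (y^2 - x^2) / (x^2 * y^2) + a * c * (z^2 - x^2) / (x^2 * z^2)|
        ≤ |a * b * (y^2 - x^2) / (x^2 * y^2)| + |a * c * (z^2 - x^2) / (x^2 * z^2)| :=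
          abs_add_le _ _
      _ ≤ 16 * D / B^4 + 16 * D / B^4 := add_le_add e1 e2
      _ = 32 * D / B^4 := by ring
  have key : (a / x^2) / S - a = (a / x^2 - a * S) / S := by
    field_simp
  rw [key, abs_div, abs_of_pos hSpos, div_le_div_iff₀ hSpos (by positivity)]
  calc |a / x^2 - a * S| * B^2 ≤ (32 * D / B^4) * B^2 := by
        apply mul_le_mul_of_nonneg_right hNbound (by positivity)
    _ = 32 * D / B^2 := by field_simp
    _ ≤ 72 * D * S := by
        have h1 : 72 * D * (4/(9*B^2)) ≤ 72 * D * S :=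
          mul_le_mul_of_nonneg_left hSlb (by positivity)
        calc 32 * D / B^2 = 72 * D * (4/(9*B^2)) := by field_simp; ring
          _ ≤ 72 * D * S := h1

/-- If the smoothness indicators satisfy `I_k = A h² (1 + O(h))` with the same constant
`A > 0` for all `k`, and `ε = h²`, `τ = 2`, then the CWENO nonlinear weights satisfy
`ω_k = C_k + O(h)` for small `h`. -/
theorem cweno_weights_accuracy (C : Fin 3 → ℝ) (hC : ∀ k, C k ∈ Set.Ioo (0 : ℝ) 1)
    (hCsum : ∑ k, C k = 1) (A M : ℝ) (hA : 0 < A)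
    (I : ℝ → Fin 3 → ℝ)
    (hI : ∀ h : ℝ, 0 < h → ∀ k, |I h k - A * h ^ 2| ≤ M * h ^ 3)
    (ω : ℝ → Fin 3 → ℝ)
    (hω : ∀ h : ℝ, 0 < h → ∀ k,
      ω h k = (C k / (h ^ 2 + I h k) ^ 2) / (∑ l, C l / (h ^ 2 + I h l) ^ 2)) :
    ∃ M' δ : ℝ, 0 < δ ∧ ∀ h : ℝ, 0 < h → h < δ → ∀ k, |ω h k - C k| ≤ M' * h := by
  have hM : 0 ≤ M := by
    have h1 := hI 1 one_pos 0
    have h2 := abs_nonneg (I 1 0 - A * 1 ^ 2)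
    nlinarith
  refine ⟨432 * (M + 1), (1 + A) / (2 * (M + 1)), by positivity, ?_⟩
  intro h hh hδ k
  set B := (1 + A) * h ^ 2 with hBdef
  have hBpos : 0 < B := by positivity
  have hMh : M * h ≤ (1 + A) / 2 := by
    have : M * h ≤ M * ((1 + A) / (2 * (M + 1))) := by
      apply mul_le_mul_of_nonneg_left hδ.le hM
    have h2 : M * ((1 + A) / (2 * (M + 1))) ≤ (M + 1) * ((1 + A) / (2 * (M + 1))) := by
      apply mul_le_mul_of_nonneg_right (by linarith) (by positivity)
    have h3 : (M + 1) * ((1 + A) / (2 * (M + 1))) = (1 + A) / 2 := by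
      field_simp
    linarith
  have hxB : ∀ l, |(h ^ 2 + I h l) - B| ≤ M * h ^ 3 := by
    intro l
    have := hI h hh l
    have heq : (h ^ 2 + I h l) - B = I h l - A * h ^ 2 := by rw [hBdef]; ring
    rwa [heq]
  have hxbnd : ∀ l, B / 2 ≤ h ^ 2 + I h l ∧ h ^ 2 + I h l ≤ 3 * B / 2 := by
    intro l
    have h1 := hxB l
    rw [abs_le] at h1
    have h2 : M * h ^ 3 ≤ (1 + A) / 2 * h ^ 2 := by nlinarith
    constructor <;> [nlinarith; nlinarith]
  set D := 6 * M * (1 + A) * h ^ 5 with hDdef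
  have hsq : ∀ l m, |(h ^ 2 + I h l) ^ 2 - (h ^ 2 + I h m) ^ 2| ≤ D := by
    intro l m
    have h1 := hxB l
    have h2 := hxB m
    have h3 := (hxbnd l).2
    have h4 := (hxbnd m).2
    have h5 := (hxbnd l).1
    have h6 := (hxbnd m).1
    rw [abs_le] at h1 h2 ⊢
    constructor <;> nlinarith [sq_nonneg h, pow_pos hh 3, pow_pos hh 2]
  have hS3 : (∑ l, C l / (h ^ 2 + I h l) ^ 2) =
      C 0 / (h ^ 2 + I h 0) ^ 2 + C 1 / (h ^ 2 + I h 1) ^ 2 + C 2 / (h ^ 2 + I h 2) ^ 2 := by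
    rw [Fin.sum_univ_three]
  have hC3 : C 0 + C 1 + C 2 = 1 := by rw [← Fin.sum_univ_three C]; exact hCsum
  have hfinal : 72 * D / B ^ 2 ≤ 432 * (M + 1) * h := by
    rw [div_le_iff₀ (by positivity)]
    rw [hDdef, hBdef]
    nlinarith [pow_pos hh 5, sq_nonneg A, mul_nonneg hM (pow_pos hh 5).le, pow_pos hh 4, sq_nonneg (A * h^2), sq_nonneg h, mul_nonneg (mul_nonneg hM (pow_pos hh 5).le) (sq_nonneg A), mul_nonneg (mul_nonneg hM (pow_pos hh 5).le) hA.le, mul_nonneg (pow_pos hh 5).le (sq_nonneg A), mul_nonneg (pow_pos hh 5).le hA.le]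
  have hmain : |ω h k - C k| ≤ 72 * D / B ^ 2 := by
    rw [hω h hh k]
    fin_cases k
    · exact cweno_aux (C 0) (C 1) (C 2) (h ^ 2 + I h 0) (h ^ 2 + I h 1) (h ^ 2 + I h 2)
        B D _ (hC 0).1 (hC 1).1 (hC 2).1 (hC 0).2.le (hC 1).2.le (hC 2).2.le hC3 hBpos
        (hxbnd 0).1 (hxbnd 0).2 (hxbnd 1).1 (hxbnd 1).2 (hxbnd 2).1 (hxbnd 2).2
        (hsq 0 1) (hsq 0 2) (by rw [hS3])
    · exact cweno_aux (C 1) (C 0) (C 2) (h ^ 2 + I h 1) (h ^ 2 + I h 0) (h ^ 2 + I h 2)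
        B D _ (hC 1).1 (hC 0).1 (hC 2).1 (hC 1).2.le (hC 0).2.le (hC 2).2.le (by linarith) hBpos
        (hxbnd 1).1 (hxbnd 1).2 (hxbnd 0).1 (hxbnd 0).2 (hxbnd 2).1 (hxbnd 2).2
        (hsq 1 0) (hsq 1 2) (by rw [hS3]; ring)
    · exact cweno_aux (C 2) (C 0) (C 1) (h ^ 2 + I h 2) (h ^ 2 + I h 0) (h ^ 2 + I h 1)
        B D _ (hC 2).1 (hC 0).1 (hC 1).1 (hC 2).2.le (hC 0).2.le (hC 1).2.le (by linarith) hBpos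
        (hxbnd 2).1 (hxbnd 2).2 (hxbnd 0).1 (hxbnd 0).2 (hxbnd 1).1 (hxbnd 1).2
        (hsq 2 0) (hsq 2 1) (by rw [hS3]; ring)
  linarith
end

section
/- The conservatively corrected blended update u_j^{Q} = u_j^{B} + (ω_j^H/(ω_j^H + ω_{j+1}^H)) μ_{j+1/2} + (ω_j^H/(ω_j^H + ω_{j−1}^H)) μ_{j−1/2}, where u_j^B = ū_j^n − (Δt/h)[(ω_j^H/C_H)ΔF_j^{D} + (ω_j^L − (C_L/C_H)ω_j^H)ΔF_j^{I}] and μ_{j+1/2} is the interface mass defect, can be written in conservative form u_j^Q = ū_j^n − (Δt/h)(F_{j+1/2}^Q − F_{j−1/2}^Q) with F_{j+1/2}^Q = (1/C_H)·(2ω_j^Hω_{j+1}^H/(ω_j^H+ω_{j+1}^H))·F_{j+1/2}^D + (1/C_H)[C_H(ω_j^Lω_{j+1}^H + ω_j^Hω_{j+1}^L)/(ω_j^H+ω_{j+1}^H) − C_L·2ω_j^Hω_{j+1}^H/(ω_j^H+ω_{j+1}^H)]·F_{j+1/2}^I. -/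
set_option maxHeartbeats 1000000


/-- The conservatively corrected blended Quinpi update can be written in conservative
form with the stated numerical flux. Here `FD j`, `FI j`, `FQ j` denote the fluxes at the
interface `j+1/2`, `μ j` the mass defect at the interface `j+1/2`, and `ωH, ωL` the
high- and low-order blending weights. -/
theorem quinpi_conservative_form (N : ℕ) [NeZero N] (Δt h CH CL : ℝ)
    (hΔt : 0 < Δt) (hh : 0 < h)
    (hCH : CH ∈ Set.Ioo (0 : ℝ) 1) (hCL : CL ∈ Set.Ioo (0 : ℝ) 1)
    (hCsum : CH + CL = 1)
    (ωH ωL : ZMod N → ℝ) (hωH : ∀ j, 0 < ωH j) (hωL : ∀ j, 0 ≤ ωL j)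
    (hωsum : ∀ j, ωH j + ωL j = 1)
    (FD FI : ZMod N → ℝ) (un uB uQ μ FQ : ZMod N → ℝ)
    (hμ : ∀ j, μ j = Δt / (CH * h) *
      ((ωH j - ωH (j + 1)) * FD j +
        (CH * (ωL j - ωL (j + 1)) - CL * (ωH j - ωH (j + 1))) * FI j))
    (huB : ∀ j, uB j = un j - Δt / h *
      ((ωH j / CH) * (FD j - FD (j - 1)) +
        (ωL j - CL / CH * ωH j) * (FI j - FI (j - 1))))
    (huQ : ∀ j, uQ j = uB j + (ωH j / (ωH j + ωH (j + 1))) * μ j +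
      (ωH j / (ωH j + ωH (j - 1))) * μ (j - 1))
    (hFQ : ∀ j, FQ j =
      (1 / CH) * (2 * ωH j * ωH (j + 1) / (ωH j + ωH (j + 1))) * FD j +
      (1 / CH) * (CH * (ωL j * ωH (j + 1) + ωH j * ωL (j + 1)) / (ωH j + ωH (j + 1)) -
        CL * (2 * ωH j * ωH (j + 1) / (ωH j + ωH (j + 1)))) * FI j) :
    ∀ j : ZMod N, uQ j = un j - Δt / h * (FQ j - FQ (j - 1)) := by
  intro j
  have hCH0 : CH ≠ 0 := ne_of_gt hCH.1
  have hh0 : h ≠ 0 := ne_of_gt hh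
  have hω1 : ωL j = 1 - ωH j := by linarith [hωsum j]
  have hω2 : ωL (j + 1) = 1 - ωH (j + 1) := by linarith [hωsum (j + 1)]
  have hω3 : ωL (j - 1) = 1 - ωH (j - 1) := by linarith [hωsum (j - 1)]
  have hC : CL = 1 - CH := by linarith
  rw [huQ j, huB j, hμ j, hμ (j - 1), hFQ j, hFQ (j - 1), sub_add_cancel,
    hω1, hω2, hω3, hC]
  have ha := hωH j
  have hb := hωH (j + 1)
  have hc := hωH (j - 1)
  generalize ωH j = a at *
  generalize ωH (j + 1) = b at *
  generalize ωH (j - 1) = c at *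
  generalize FD j = p at *
  generalize FD (j - 1) = q at *
  generalize FI j = r at *
  generalize FI (j - 1) = s at *
  have h1 : a + b ≠ 0 := by positivity
  have h2 : a + c ≠ 0 := by positivity
  have h3 : c + a ≠ 0 := by positivity
  field_simp
  ring
end
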